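/- arXiv:2409.15549 — 4 statements merged into one kernel-verified Lean document; each statement's English description precedes it below -/
import Mathlib

section
/- For any ensemble consisting of a finite index set J, a probability vector p on J, and density matrices σ_j on ℂ^N with ρ = ∑_j p_j σ_j, the mutual information of the computational-basis measurement satisfies the lower bound S(ρ) − H(Y|J) ≤ I(J;Y), where H(Y|J) = H(J,Y) − H(J) = ∑_j p_j H(diag σ_j); the gap between I(J;Y) and this lower bound equals the relative entropy of coherence C(ρ) = H(diag ρ) − S(ρ). -/
open Finset Matrix
open scoped Classical ComplexOrder

/-- Shannon entropy (base 2) of a vector of reals, with the convention `0 · log₂ 0 = 0`. -/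
noncomputable def shEntropy {α : Type*} [Fintype α] (q : α → ℝ) : ℝ :=
  -∑ a, q a * Real.logb 2 (q a)

/-- Von Neumann entropy (base 2) of a Hermitian matrix, via its eigenvalues. -/
noncomputable def vnEntropy {α : Type*} [Fintype α] [DecidableEq α]
    (ρ : Matrix α α ℂ) : ℝ :=
  if h : ρ.IsHermitian then -∑ i, h.eigenvalues i * Real.logb 2 (h.eigenvalues i)
  else 0

/-- Mutual information `I(J;Y) = H(J) + H(Y) - H(J,Y)` between the index of an ensemble
`{p_j, σ_j}` and the outcome of the computational-basis measurement, whose joint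
distribution is `Pr(J = j, Y = y) = p_j (σ_j)_{yy}`. -/
noncomputable def mutualInfoEnsemble {J α : Type*} [Fintype J] [Fintype α]
    (p : J → ℝ) (σ : J → Matrix α α ℂ) : ℝ :=
  shEntropy p + shEntropy (fun y => ∑ j, p j * (σ j y y).re)
    - shEntropy (fun jy : J × α => p jy.1 * (σ jy.1 jy.2 jy.2).re)

/-!
Diagonalize `ρ = U diag(λ) U*`. The diagonal of `ρ` is then the image of the spectrum `λ` under
the doubly stochastic matrix `(|U_{yi}|²)`, and Shannon entropy, a sum of the concave function
`-x log x`, cannot decrease under a doubly stochastic map (Jensen along each row, then the column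
sums are `1`). Hence `C(ρ) ≥ 0`, and the lower bound and the gap identity are algebra in
`I = H(J) + H(Y) - H(J,Y)`. The formula for `H(Y|J)` is the chain rule, as each `diag σ_j` sums
to `tr σ_j = 1`.
-/

namespace Matrix

variable {n : Type*} [Fintype n] [DecidableEq n]

lemma sum_normSq_row_of_mem_unitaryGroup {U : Matrix n n ℂ} (hU : U ∈ unitaryGroup n ℂ)
    (i : n) : ∑ j, Complex.normSq (U i j) = 1 := by
  have h := congr_arg Complex.re (congr_fun₂ (mem_unitaryGroup_iff.mp hU) i i)
  simpa [mul_apply, Complex.re_sum, Complex.normSq_apply, mul_comm] using h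

lemma normSq_mem_doublyStochastic_of_mem_unitaryGroup {U : Matrix n n ℂ}
    (hU : U ∈ unitaryGroup n ℂ) :
    of (fun i j => Complex.normSq (U i j)) ∈ doublyStochastic ℝ n := by
  refine mem_doublyStochastic_iff_sum.mpr
    ⟨fun i j => Complex.normSq_nonneg _, sum_normSq_row_of_mem_unitaryGroup hU, fun j => ?_⟩
  simpa using sum_normSq_row_of_mem_unitaryGroup (Unitary.star_mem hU) j

namespace IsHermitian

lemma re_diag_eq_mulVec_eigenvalues {A : Matrix n n ℂ} (hA : A.IsHermitian) :
    (fun i => (A i i).re) =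
      of (fun i j => Complex.normSq (hA.eigenvectorUnitary.1 i j)) *ᵥ hA.eigenvalues := by
  funext i
  conv_lhs => rw [hA.spectral_theorem, Unitary.conjStarAlgAut_apply]
  simp only [mul_apply, diagonal_apply, Function.comp_apply, mul_ite, mul_zero,
    Finset.sum_ite_eq', Finset.mem_univ, if_pos, star_apply, Complex.re_sum, mulVec,
    dotProduct, of_apply]
  refine Finset.sum_congr rfl fun j _ => ?_
  simp [Complex.mul_re, Complex.normSq_apply]
  ring

lemma vnEntropy_eq_shEntropy_eigenvalues {A : Matrix n n ℂ} (hA : A.IsHermitian) :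
    vnEntropy A = shEntropy hA.eigenvalues := by
  rw [vnEntropy, dif_pos hA, shEntropy]

end IsHermitian

end Matrix

lemma shEntropy_eq_sum_negMulLog {α : Type*} [Fintype α] (q : α → ℝ) :
    shEntropy q = (∑ a, Real.negMulLog (q a)) / Real.log 2 := by
  simp only [shEntropy, Real.negMulLog, Real.logb, Finset.sum_div, ← Finset.sum_neg_distrib]
  exact Finset.sum_congr rfl fun a _ => by ring

lemma shEntropy_le_shEntropy_mulVec {n : Type*} [Fintype n] [DecidableEq n]
    {M : Matrix n n ℝ} (hM : M ∈ doublyStochastic ℝ n) {q : n → ℝ} (hq : ∀ i, 0 ≤ q i) :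
    shEntropy q ≤ shEntropy (M *ᵥ q) := by
  rw [shEntropy_eq_sum_negMulLog, shEntropy_eq_sum_negMulLog]
  refine div_le_div_of_nonneg_right ?_ (Real.log_nonneg one_le_two)
  calc ∑ j, Real.negMulLog (q j)
      = ∑ i, ∑ j, M i j * Real.negMulLog (q j) := by
        rw [Finset.sum_comm]; simp [← Finset.sum_mul, sum_col_of_mem_doublyStochastic hM]
    _ ≤ ∑ i, Real.negMulLog ((M *ᵥ q) i) := by
        gcongr with i
        simpa [mulVec, dotProduct] using Real.concaveOn_negMulLog.le_map_sum
          (fun j _ => nonneg_of_mem_doublyStochastic hM) (sum_row_of_mem_doublyStochastic hM i)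
          (fun j _ => Set.mem_Ici.mpr (hq j))

lemma Matrix.PosSemidef.vnEntropy_le_shEntropy_diag {n : Type*} [Fintype n] [DecidableEq n]
    {A : Matrix n n ℂ} (hA : A.PosSemidef) : vnEntropy A ≤ shEntropy (fun i => (A i i).re) := by
  rw [hA.isHermitian.vnEntropy_eq_shEntropy_eigenvalues,
    hA.isHermitian.re_diag_eq_mulVec_eigenvalues]
  exact shEntropy_le_shEntropy_mulVec
    (normSq_mem_doublyStochastic_of_mem_unitaryGroup hA.isHermitian.eigenvectorUnitary.2)
    hA.eigenvalues_nonneg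

lemma shEntropy_chain_rule {ι κ : Type*} [Fintype ι] [Fintype κ] (p : ι → ℝ)
    (q : ι → κ → ℝ) (hq : ∀ i, ∑ k, q i k = 1) :
    shEntropy (fun x : ι × κ => p x.1 * q x.1 x.2) =
      shEntropy p + ∑ i, p i * shEntropy (q i) := by
  simp only [shEntropy_eq_sum_negMulLog, Fintype.sum_prod_type, Real.negMulLog_mul,
    Finset.sum_add_distrib, ← Finset.sum_mul, hq, one_mul, ← Finset.mul_sum, add_div]
  congr 1
  simp only [Finset.sum_div, mul_div_assoc]

theorem mutual_info_lower_bound_coherence_general {J : Type*} [Fintype J] {N : ℕ}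
    (p : J → ℝ) (hp0 : ∀ j, 0 ≤ p j)
    (σ : J → Matrix (Fin N) (Fin N) ℂ)
    (hpsd : ∀ j, (σ j).PosSemidef) (htr : ∀ j, (σ j).trace = 1) :
    let ρ : Matrix (Fin N) (Fin N) ℂ := ∑ j, p j • σ j
    -- H(Y|J) = H(J,Y) − H(J)
    let HYgJ : ℝ :=
      shEntropy (fun jy : J × Fin N => p jy.1 * (σ jy.1 jy.2 jy.2).re) - shEntropy p
    HYgJ = ∑ j, p j * shEntropy (fun y => (σ j y y).re) ∧
      vnEntropy ρ - HYgJ ≤ mutualInfoEnsemble p σ ∧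
      mutualInfoEnsemble p σ - (vnEntropy ρ - HYgJ) =
        shEntropy (fun y => (ρ y y).re) - vnEntropy ρ := by
  intro ρ HYgJ
  have hσ_diag : ∀ j, ∑ y, (σ j y y).re = 1 := fun j => by
    simpa [Matrix.trace, Complex.re_sum] using congr_arg Complex.re (htr j)
  have hρ_diag : (fun y => (ρ y y).re) = fun y => ∑ j, p j * (σ j y y).re := by
    funext y
    simp [ρ, Matrix.sum_apply, Complex.re_sum]
  have hρ : ρ.PosSemidef := posSemidef_sum _ fun j _ => (hpsd j).smul (hp0 j)
  have hcoherence := hρ.vnEntropy_le_shEntropy_diag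
  rw [hρ_diag] at hcoherence ⊢
  refine ⟨?_, ?_, ?_⟩
  · simp only [HYgJ, shEntropy_chain_rule p _ hσ_diag]
    ring
  · simp only [mutualInfoEnsemble, HYgJ]
    linarith
  · simp only [mutualInfoEnsemble, HYgJ]
    ring

/-- Lower bound on the mutual information of the computational-basis measurement:
`S(ρ) − H(Y|J) ≤ I(J;Y)`, where `H(Y|J) = H(J,Y) − H(J) = ∑_j p_j H(diag σ_j)`, and the
gap between `I(J;Y)` and the lower bound is the relative entropy of coherence
`C(ρ) = H(diag ρ) − S(ρ)`. -/
theorem mutual_info_lower_bound_coherence {J : Type*} [Fintype J] {N : ℕ}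
    (p : J → ℝ) (hp0 : ∀ j, 0 ≤ p j) (hp1 : ∑ j, p j = 1)
    (σ : J → Matrix (Fin N) (Fin N) ℂ)
    (hpsd : ∀ j, (σ j).PosSemidef) (htr : ∀ j, (σ j).trace = 1) :
    let ρ : Matrix (Fin N) (Fin N) ℂ := ∑ j, p j • σ j
    -- H(Y|J) = H(J,Y) − H(J)
    let HYgJ : ℝ :=
      shEntropy (fun jy : J × Fin N => p jy.1 * (σ jy.1 jy.2 jy.2).re) - shEntropy p
    HYgJ = ∑ j, p j * shEntropy (fun y => (σ j y y).re) ∧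
      vnEntropy ρ - HYgJ ≤ mutualInfoEnsemble p σ ∧
      mutualInfoEnsemble p σ - (vnEntropy ρ - HYgJ) =
        shEntropy (fun y => (ρ y y).re) - vnEntropy ρ :=
  mutual_info_lower_bound_coherence_general p hp0 σ hpsd htr
end

section
/- Let P be a joint probability mass function on a finite set J × Y whose marginal on J is uniform, with |J| = M ≥ 1. Define the optimal guessing probability p_s := ∑_{y∈Y} max_{j∈J} P(j,y). Then p_s ≥ 2^{I(J;Y) − log₂ M}, where I(J;Y) = H(J) + H(Y) − H(J,Y) is the mutual information of P. -/
open Finset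
open scoped Classical

/-- Mutual information `I(J;Y) = H(J) + H(Y) − H(J,Y)` of a joint pmf on `J × Y`. -/
noncomputable def miJoint {J Y : Type*} [Fintype J] [Fintype Y] (P : J × Y → ℝ) : ℝ :=
  shEntropy (fun j => ∑ y, P (j, y)) + shEntropy (fun y => ∑ j, P (j, y)) - shEntropy P

/-!
With `q y = ∑ j, P (j, y)`, `m y = max_j P (j, y)` and `p = ∑ y, m y`, the uniform marginal gives
`H(J) = log₂ M`, so `I(J;Y) - log₂ M = ∑ P log₂ P - ∑ q log₂ q`. Replacing `P (j, y)` by the larger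
`m y` inside the logarithm bounds this by `∑ q log₂ (m / q)`, and Gibbs' inequality (`log x ≤ x - 1`
applied to `x = m / (q p)`) bounds that by `log₂ p`.
-/

open Real

theorem shEntropy_const_one_div_card (α : Type*) [Fintype α] :
    shEntropy (fun _ : α => 1 / (Fintype.card α : ℝ)) = logb 2 (Fintype.card α) := by
  rcases Nat.eq_zero_or_pos (Fintype.card α) with h | h
  · simp [shEntropy, h]
  · simp only [shEntropy, sum_const, card_univ, nsmul_eq_mul, one_div, logb_inv]
    field_simp

namespace Real

variable {b : ℝ}

theorem mul_logb_le_mul_logb (hb : 1 < b) {x y : ℝ} (hx : 0 ≤ x) (hxy : x ≤ y) :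
    x * logb b x ≤ x * logb b y := by
  rcases hx.eq_or_lt with rfl | hx
  · simp
  · exact mul_le_mul_of_nonneg_left (logb_le_logb_of_le hb hx hxy) hx.le

variable {ι : Type*} [Fintype ι] {q m : ι → ℝ}

theorem sum_pos_of_pos_imp_pos (hq : 0 < ∑ i, q i) (hm0 : ∀ i, 0 ≤ m i)
    (hqm : ∀ i, 0 < q i → 0 < m i) : 0 < ∑ i, m i := by
  obtain ⟨i, -, hi⟩ := exists_lt_of_sum_lt (f := fun _ => (0 : ℝ)) (g := q) (by simpa using hq)
  exact sum_pos' (fun j _ => hm0 j) ⟨i, mem_univ i, hqm i hi⟩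

theorem sum_mul_logb_sub_sum_mul_logb_le_logb_sum (hb : 1 < b) (hq0 : ∀ i, 0 ≤ q i)
    (hq1 : ∑ i, q i = 1) (hm0 : ∀ i, 0 ≤ m i) (hqm : ∀ i, 0 < q i → 0 < m i) :
    ∑ i, q i * logb b (m i) - ∑ i, q i * logb b (q i) ≤ logb b (∑ i, m i) := by
  set p := ∑ i, m i
  have hp : 0 < p := sum_pos_of_pos_imp_pos (hq1 ▸ one_pos) hm0 hqm
  have hlogb : 0 < log b := log_pos hb
  have hterm : ∀ i, q i * logb b (m i) - q i * logb b (q i) - q i * logb b p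
      ≤ (m i / p - q i) / log b := by
    intro i
    rcases (hq0 i).eq_or_lt with hq | hq
    · rw [← hq]
      have hmi := hm0 i
      simp only [zero_mul, sub_zero]
      positivity
    have hm := hqm i hq
    calc q i * logb b (m i) - q i * logb b (q i) - q i * logb b p
        = q i * log (m i / (q i * p)) / log b := by
          rw [log_div hm.ne' (by positivity), log_mul hq.ne' hp.ne']
          simp only [logb]
          ring
      _ ≤ q i * (m i / (q i * p) - 1) / log b := by
          gcongr
          exact log_le_sub_one_of_pos (by positivity)
      _ = (m i / p - q i) / log b := by field_simp
  have hsum := sum_le_sum fun i (_ : i ∈ univ) => hterm i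
  have hsplit : ∑ i, (q i * logb b (m i) - q i * logb b (q i) - q i * logb b p)
      = ∑ i, q i * logb b (m i) - ∑ i, q i * logb b (q i) - logb b p := by
    rw [sum_sub_distrib, sum_sub_distrib, ← sum_mul, hq1, one_mul]
  have hzero : ∑ i, (m i / p - q i) / log b = 0 := by
    rw [← sum_div, sum_sub_distrib, ← sum_div, div_self hp.ne', hq1, sub_self, zero_div]
  linarith

end Real

theorem sum_mul_logb_le_sum_marginal_mul_logb_iSup {J Y : Type*} [Fintype J] [Fintype Y]
    {b : ℝ} (hb : 1 < b) (P : J × Y → ℝ) (hP0 : ∀ jy, 0 ≤ P jy) :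
    ∑ jy, P jy * logb b (P jy) ≤ ∑ y, (∑ j, P (j, y)) * logb b (⨆ j, P (j, y)) := by
  rw [Fintype.sum_prod_type, sum_comm]
  refine sum_le_sum fun y _ => ?_
  rw [sum_mul]
  exact sum_le_sum fun j _ =>
    mul_logb_le_mul_logb hb (hP0 _) (le_ciSup (Finite.bddAbove_range fun j => P (j, y)) j)

theorem reverse_fano_general {J Y : Type*} [Fintype J] [Fintype Y]
    (M : ℕ) (hcard : Fintype.card J = M)
    (P : J × Y → ℝ) (hP0 : ∀ jy, 0 ≤ P jy) (hP1 : ∑ jy, P jy = 1)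
    (hunif : ∀ j, ∑ y, P (j, y) = 1 / M) :
    (2 : ℝ) ^ (miJoint P - Real.logb 2 M) ≤ ∑ y, ⨆ j, P (j, y) := by
  set q : Y → ℝ := fun y => ∑ j, P (j, y)
  set m : Y → ℝ := fun y => ⨆ j, P (j, y)
  have hq0 : ∀ y, 0 ≤ q y := fun y => sum_nonneg fun j _ => hP0 _
  have hq1 : ∑ y, q y = 1 := by rw [sum_comm, ← Fintype.sum_prod_type, hP1]
  have hm0 : ∀ y, 0 ≤ m y := fun y => iSup_nonneg fun j => hP0 _
  have hqm : ∀ y, 0 < q y → 0 < m y := fun y hy => by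
    obtain ⟨j, -, hj⟩ := (sum_pos_iff_of_nonneg fun j _ => hP0 (j, y)).mp hy
    exact hj.trans_le (le_ciSup (Finite.bddAbove_range fun j => P (j, y)) j)
  have hHJ : shEntropy (fun j => ∑ y, P (j, y)) = logb 2 M := by
    simp only [hunif, ← hcard, shEntropy_const_one_div_card]
  have hI : miJoint P - logb 2 M ≤ logb 2 (∑ y, m y) := by
    have hjoint := sum_mul_logb_le_sum_marginal_mul_logb_iSup one_lt_two P hP0
    have hgibbs := sum_mul_logb_sub_sum_mul_logb_le_logb_sum one_lt_two hq0 hq1 hm0 hqm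
    rw [miJoint, hHJ, shEntropy, shEntropy]
    linarith
  calc (2 : ℝ) ^ (miJoint P - logb 2 M) ≤ 2 ^ logb 2 (∑ y, m y) :=
        rpow_le_rpow_of_exponent_le one_le_two hI
    _ = ∑ y, m y := rpow_logb two_pos (by norm_num)
        (sum_pos_of_pos_imp_pos (hq1 ▸ one_pos) hm0 hqm)

/-- Reverse Fano inequality: if the marginal of the joint pmf `P` on `J` is uniform with
`|J| = M ≥ 1`, then the optimal guessing probability `p_s = ∑_y max_j P(j,y)` satisfies
`p_s ≥ 2^(I(J;Y) − log₂ M)`. -/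
theorem reverse_fano {J Y : Type*} [Fintype J] [Fintype Y] [Nonempty J]
    (M : ℕ) (hM : 1 ≤ M) (hcard : Fintype.card J = M)
    (P : J × Y → ℝ) (hP0 : ∀ jy, 0 ≤ P jy) (hP1 : ∑ jy, P jy = 1)
    (hunif : ∀ j, ∑ y, P (j, y) = 1 / M) :
    (2 : ℝ) ^ (miJoint P - Real.logb 2 M) ≤ ∑ y, ⨆ j, P (j, y) :=
  reverse_fano_general M hcard P hP0 hP1 hunif
end

section
/- Let k ≥ 1 and let f : 𝔽₂^k → 𝔽₂ be either constant or balanced (balanced means |f⁻¹(0)| = |f⁻¹(1)| = 2^{k−1}). For y ∈ 𝔽₂^k define the Deutsch–Jozsa outcome probability Pr(Y = y) := 2^{−2k} |∑_{x∈𝔽₂^k} (−1)^{f(x) + x·y}|², where x·y = ∑_i x_i y_i mod 2. Then Pr(Y = 0) = 1 if f is constant and Pr(Y = 0) = 0 if f is balanced; hence the Deutsch–Jozsa algorithm decides with certainty, in a single query, whether f is constant or balanced. -/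
open Finset

/-- **Deutsch–Jozsa.** For `f : 𝔽₂^k → 𝔽₂` promised to be constant or balanced, the
probability `Pr(Y = y) = 2^{-2k} |∑_x (−1)^{f(x) + x·y}|²` of the outcome `y` of the
Deutsch–Jozsa algorithm satisfies `Pr(Y = 0) = 1` if `f` is constant and `Pr(Y = 0) = 0`
if `f` is balanced, so the algorithm decides with certainty in a single query. -/
theorem deutsch_jozsa {k : ℕ} (hk : 1 ≤ k)
    (f : (Fin k → ZMod 2) → ZMod 2)
    (hf : (∃ c, ∀ x, f x = c) ∨
      ((Finset.univ.filter fun x => f x = 0).card = 2 ^ (k - 1) ∧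
        (Finset.univ.filter fun x => f x = 1).card = 2 ^ (k - 1))) :
    let Pr : (Fin k → ZMod 2) → ℝ := fun y =>
      (∑ x, (-1 : ℝ) ^ (f x + ∑ i, x i * y i).val) ^ 2 / (2 : ℝ) ^ (2 * k)
    ((∃ c, ∀ x, f x = c) → Pr 0 = 1) ∧
      (((Finset.univ.filter fun x => f x = 0).card = 2 ^ (k - 1) ∧
        (Finset.univ.filter fun x => f x = 1).card = 2 ^ (k - 1)) → Pr 0 = 0) := by
  intro Pr
  have hsum : ∀ x : Fin k → ZMod 2,
      (f x + ∑ i, x i * (0 : Fin k → ZMod 2) i) = f x := by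
    intro x; simp
  have hcard : (Finset.univ : Finset (Fin k → ZMod 2)).card = 2 ^ k := by
    simp [Finset.card_univ]
  have hzmod : ∀ a : ZMod 2, ¬ a = 0 ↔ a = 1 := by decide
  constructor
  · rintro ⟨c, hc⟩
    show (∑ x, (-1 : ℝ) ^ (f x + ∑ i, x i * (0 : Fin k → ZMod 2) i).val) ^ 2
        / (2 : ℝ) ^ (2 * k) = 1
    have hs : (∑ x : Fin k → ZMod 2,
        (-1 : ℝ) ^ (f x + ∑ i, x i * (0 : Fin k → ZMod 2) i).val)
        = (2 : ℝ) ^ k * (-1 : ℝ) ^ c.val := by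
      rw [Finset.sum_congr rfl (fun x _ => by rw [hsum x, hc x])]
      simp [hcard]
    rw [hs, mul_pow, ← pow_mul (-1 : ℝ), mul_comm c.val 2, pow_mul, neg_one_sq,
      one_pow, mul_one, ← pow_mul]
    rw [mul_comm k 2]
    exact div_self (by positivity)
  · rintro ⟨h0, h1⟩
    show (∑ x, (-1 : ℝ) ^ (f x + ∑ i, x i * (0 : Fin k → ZMod 2) i).val) ^ 2
        / (2 : ℝ) ^ (2 * k) = 0
    have key : (∑ x : Fin k → ZMod 2,
        (-1 : ℝ) ^ (f x + ∑ i, x i * (0 : Fin k → ZMod 2) i).val) = 0 := by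
      rw [Finset.sum_congr rfl (fun x _ => by rw [hsum x])]
      rw [← Finset.sum_filter_add_sum_filter_not Finset.univ (fun x => f x = 0)]
      have e0 : ∑ x ∈ Finset.univ.filter (fun x => f x = 0),
          (-1 : ℝ) ^ (f x).val = ((2 : ℕ) ^ (k - 1) : ℝ) := by
        have h : ∀ x ∈ Finset.univ.filter (fun x => f x = 0),
            (-1 : ℝ) ^ (f x).val = 1 := by
          intro x hx
          rw [(Finset.mem_filter.1 hx).2]
          norm_num
        rw [Finset.sum_congr rfl h, Finset.sum_const, h0]
        simp
      have e1 : ∑ x ∈ Finset.univ.filter (fun x => ¬ f x = 0),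
          (-1 : ℝ) ^ (f x).val = -((2 : ℕ) ^ (k - 1) : ℝ) := by
        have hfe : (Finset.univ.filter fun x => ¬ f x = 0)
            = (Finset.univ.filter fun x => f x = 1) :=
          Finset.filter_congr (fun x _ => hzmod (f x))
        have h : ∀ x ∈ Finset.univ.filter (fun x => f x = 1),
            (-1 : ℝ) ^ (f x).val = -1 := by
          intro x hx
          rw [(Finset.mem_filter.1 hx).2]
          have : (1 : ZMod 2).val = 1 := rfl
          rw [this, pow_one]
        rw [hfe, Finset.sum_congr rfl h, Finset.sum_const, h1]
        simp
      rw [e0, e1]; ring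
    rw [key]
    simp
end

section
/- Let G be a finite abelian group and H ≤ G a subgroup. Define the G×G complex matrix σ_H by (σ_H)_{g,g'} = 1/|G| if g − g' ∈ H and 0 otherwise. Then σ_H is a density matrix whose nonzero eigenvalues are all equal to |H|/|G|, occurring with multiplicity |G|/|H|; consequently its von Neumann entropy is S(σ_H) = log₂|G| − log₂|H|. -/
open Finset Matrix
open scoped Classical ComplexOrder

/-
The matrix `σ_H` is `|G|⁻¹` times the indicator matrix of the relation `g ≡ g' (mod H)`;
summing over the middle index counts one coset, so `σ_H² = (|H|/|G|) σ_H`. Hence every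
eigenvalue `λ` of the Hermitian matrix `σ_H` satisfies `λ² = (|H|/|G|) λ`, i.e.
`λ ∈ {0, |H|/|G|}`. Since the eigenvalues sum to `tr σ_H = 1`, the eigenvalue `|H|/|G|` occurs
`|G|/|H|` times, and the entropy of a distribution that is uniform on its support is minus the
logarithm of the common value.
-/

theorem vnEntropy_of_isHermitian {α : Type*} [Fintype α] [DecidableEq α] {ρ : Matrix α α ℂ}
    (hρ : ρ.IsHermitian) : vnEntropy ρ = shEntropy hρ.eigenvalues :=
  dif_pos hρ

section UniformOnSupport

variable {α : Type*} [Fintype α] {q : α → ℝ} {c : ℝ}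

theorem card_filter_ne_zero_mul_eq_one_of_forall_eq_or_eq_zero (hq : ∀ a, q a = c ∨ q a = 0)
    (hsum : ∑ a, q a = 1) : #{a | q a ≠ 0} * c = 1 := by
  rw [← hsum, ← Finset.sum_filter_ne_zero, ← nsmul_eq_mul, ← Finset.sum_const]
  refine Finset.sum_congr rfl fun a ha => ?_
  exact ((hq a).resolve_right (Finset.mem_filter.1 ha).2).symm

theorem shEntropy_eq_neg_logb_of_forall_eq_or_eq_zero (hq : ∀ a, q a = c ∨ q a = 0)
    (hsum : ∑ a, q a = 1) : shEntropy q = -Real.logb 2 c := by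
  have hterm : ∀ a, q a * Real.logb 2 (q a) = q a * Real.logb 2 c := fun a => by
    rcases hq a with h | h <;> rw [h]; simp
  rw [shEntropy, Finset.sum_congr rfl fun a _ => hterm a, ← Finset.sum_mul, hsum, one_mul]

end UniformOnSupport

namespace Matrix.IsHermitian

variable {n 𝕜 : Type*} [Fintype n] [DecidableEq n] [RCLike 𝕜] {A : Matrix n n 𝕜}

theorem eigenvalues_eq_or_eq_zero_of_mul_self_eq_smul (hA : A.IsHermitian) {c : ℝ}
    (h : A * A = (c : 𝕜) • A) (i : n) : hA.eigenvalues i = c ∨ hA.eigenvalues i = 0 := by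
  set v := (hA.eigenvectorBasis i).ofLp
  set μ := hA.eigenvalues i
  have hv : v ≠ 0 := fun h0 =>
    hA.eigenvectorBasis.orthonormal.ne_zero i (by simpa [v] using congrArg (WithLp.toLp 2) h0)
  have hAv : A *ᵥ v = (μ : 𝕜) • v := by
    rw [hA.mulVec_eigenvectorBasis, RCLike.real_smul_eq_coe_smul (K := 𝕜)]
  have hsq : ((μ * μ : ℝ) : 𝕜) • v = ((c * μ : ℝ) : 𝕜) • v := by
    calc ((μ * μ : ℝ) : 𝕜) • v = A *ᵥ (A *ᵥ v) := by
          rw [hAv, mulVec_smul, hAv, smul_smul]; push_cast; rfl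
      _ = ((c * μ : ℝ) : 𝕜) • v := by
          rw [mulVec_mulVec, h, smul_mulVec, hAv, smul_smul]; push_cast; rfl
  have hμ : μ * μ = c * μ := by exact_mod_cast smul_left_injective 𝕜 hv hsq
  rcases mul_eq_zero.1 (show (μ - c) * μ = 0 by linear_combination hμ) with h | h
  · exact Or.inl (sub_eq_zero.1 h)
  · exact Or.inr h

theorem posSemidef_of_mul_self_eq_smul (hA : A.IsHermitian) {c : ℝ} (hc : 0 ≤ c)
    (h : A * A = (c : 𝕜) • A) : A.PosSemidef :=
  hA.posSemidef_iff_eigenvalues_nonneg.2 fun i => by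
    rcases hA.eigenvalues_eq_or_eq_zero_of_mul_self_eq_smul h i with h | h <;> simp [h, hc]

end Matrix.IsHermitian

section HiddenSubgroup

variable {G : Type*} [AddCommGroup G] [Fintype G] (H : AddSubgroup G)

theorem card_filter_sub_mem (g : G) : #{g' | g - g' ∈ H} = Nat.card H := by
  rw [← Fintype.card_subtype, ← Nat.card_eq_fintype_card]
  exact Nat.card_congr ((Equiv.subLeft g).subtypeEquiv fun _ => Iff.rfl)

theorem card_filter_sub_mem_and_sub_mem (g g'' : G) :
    #{g' | g - g' ∈ H ∧ g' - g'' ∈ H} = if g - g'' ∈ H then Nat.card H else 0 := by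
  split_ifs with hg
  · rw [← card_filter_sub_mem H g]
    congr 1
    refine Finset.filter_congr fun g' _ => and_iff_left_of_imp fun hg' => ?_
    simpa using H.sub_mem hg hg'
  · refine Finset.card_eq_zero.2 (Finset.filter_false_of_mem fun g' _ hg' => hg ?_)
    simpa using H.add_mem hg'.1 hg'.2

variable (𝕜 : Type*) [RCLike 𝕜]

noncomputable def hspState : Matrix G G 𝕜 :=
  Matrix.of fun g g' => if g - g' ∈ H then ((Nat.card G : 𝕜))⁻¹ else 0

theorem hspState_isHermitian : (hspState H 𝕜).IsHermitian := by
  ext g g'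
  simp [hspState, H.sub_mem_comm_iff, apply_ite (starRingEnd 𝕜)]

theorem trace_hspState : (hspState H 𝕜).trace = 1 := by
  simp [hspState, Matrix.trace, Nat.card_eq_fintype_card]

theorem hspState_mul_self :
    hspState H 𝕜 * hspState H 𝕜 =
      ((Nat.card H / Nat.card G : ℝ) : 𝕜) • hspState H 𝕜 := by
  ext g g''
  simp only [hspState, mul_apply, of_apply, ite_zero_mul_ite_zero, ← Finset.sum_filter,
    Finset.sum_const, card_filter_sub_mem_and_sub_mem, Matrix.smul_apply, smul_eq_mul,
    nsmul_eq_mul]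
  split_ifs <;> push_cast <;> ring

end HiddenSubgroup

theorem hsp_post_query_state_general {G : Type*} [AddCommGroup G] [Fintype G]
    (H : AddSubgroup G) :
    let σ : Matrix G G ℂ :=
      Matrix.of fun g g' => if g - g' ∈ H then ((Nat.card G : ℂ))⁻¹ else 0
    σ.PosSemidef ∧ σ.trace = 1 ∧
      ∀ hσ : σ.IsHermitian,
        (∀ i, hσ.eigenvalues i = (Nat.card H : ℝ) / (Nat.card G : ℝ) ∨
          hσ.eigenvalues i = 0) ∧
        (Finset.univ.filter fun i => hσ.eigenvalues i ≠ 0).card =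
          Nat.card G / Nat.card H ∧
        vnEntropy σ = Real.logb 2 (Nat.card G) - Real.logb 2 (Nat.card H) := by
  intro σ
  have hG : (0 : ℝ) < Nat.card G := Nat.cast_pos.2 Nat.card_pos
  have hH : (0 : ℝ) < Nat.card H := Nat.cast_pos.2 Nat.card_pos
  have hsq := hspState_mul_self H ℂ
  refine ⟨(hspState_isHermitian H ℂ).posSemidef_of_mul_self_eq_smul (by positivity) hsq,
    trace_hspState H ℂ, fun hσ => ?_⟩
  have hspec := hσ.eigenvalues_eq_or_eq_zero_of_mul_self_eq_smul hsq
  have hsum : ∑ i, hσ.eigenvalues i = 1 := by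
    have h := hσ.trace_eq_sum_eigenvalues.symm.trans (trace_hspState H ℂ)
    rwa [← RCLike.ofReal_sum, ← RCLike.ofReal_one, RCLike.ofReal_inj] at h
  refine ⟨hspec, ?_, ?_⟩
  · have hcard := card_filter_ne_zero_mul_eq_one_of_forall_eq_or_eq_zero hspec hsum
    refine (Nat.div_eq_of_eq_mul_left Nat.card_pos ?_).symm
    rw [mul_div_assoc', div_eq_one_iff_eq hG.ne'] at hcard
    exact_mod_cast hcard.symm
  · rw [vnEntropy_of_isHermitian hσ, shEntropy_eq_neg_logb_of_forall_eq_or_eq_zero hspec hsum,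
      Real.logb_div hH.ne' hG.ne']
    ring

/-- The post-query reduced state `σ_H` of the hidden subgroup problem, with entries
`(σ_H)_{g,g'} = 1/|G|` if `g − g' ∈ H` and `0` otherwise, is a density matrix whose
nonzero eigenvalues all equal `|H|/|G|` with multiplicity `|G|/|H|`; consequently its
von Neumann entropy is `log₂|G| − log₂|H|`. -/
theorem hsp_post_query_state {G : Type*} [AddCommGroup G] [Fintype G] [DecidableEq G]
    (H : AddSubgroup G) :
    let σ : Matrix G G ℂ :=
      Matrix.of fun g g' => if g - g' ∈ H then ((Nat.card G : ℂ))⁻¹ else 0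
    σ.PosSemidef ∧ σ.trace = 1 ∧
      ∀ hσ : σ.IsHermitian,
        (∀ i, hσ.eigenvalues i = (Nat.card H : ℝ) / (Nat.card G : ℝ) ∨
          hσ.eigenvalues i = 0) ∧
        (Finset.univ.filter fun i => hσ.eigenvalues i ≠ 0).card =
          Nat.card G / Nat.card H ∧
        vnEntropy σ = Real.logb 2 (Nat.card G) - Real.logb 2 (Nat.card H) :=
  hsp_post_query_state_general H
end
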